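/- Let f : ℝ^n → ℝ be given by f(y) = ∑_{i=0}^k e^{⟨v_i,y⟩} where the convex hull of {v_0,...,v_k} contains the closed ball of radius δ > 0 around 0. Then f(y) ≥ e^{δ|y|} for all y ∈ ℝ^n, and hence ∫_{ℝ^n} f(y)^{-(1-α)} dy < ∞ for every α < 1. -/

import Mathlib

/-!
The linear functional `⟪·, y⟫` attains its maximum over the convex hull of the `v i` at one of
the `v i`; evaluating it at the point `δ • y / ‖y‖` of the ball gives `⟪v i, y⟫ ≥ δ ‖y‖` for some
`i`, hence `f y ≥ exp (δ ‖y‖)`. Then `f ^ (-(1 - α))` is dominated by `exp (-(1 - α) δ ‖y‖)`,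
which is integrable against Haar measure by integration in polar coordinates.
-/

open MeasureTheory Real Metric Set
open scoped RealInnerProductSpace

theorem exists_mul_norm_le_inner_of_closedBall_subset_convexHull
    {E : Type*} [NormedAddCommGroup E] [InnerProductSpace ℝ E] {s : Set E} {δ : ℝ}
    (hδ : 0 ≤ δ) (hs : closedBall (0 : E) δ ⊆ convexHull ℝ s) (y : E) :
    ∃ x ∈ s, δ * ‖y‖ ≤ ⟪x, y⟫ := by
  have hw : (δ / ‖y‖) • y ∈ closedBall (0 : E) δ := by
    rcases (norm_nonneg y).eq_or_lt with hy | hy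
    · simp [norm_eq_zero.mp hy.symm, hδ]
    · rw [mem_closedBall_zero_iff, norm_smul, norm_div, norm_norm, Real.norm_of_nonneg hδ,
        div_mul_cancel₀ _ hy.ne']
  obtain ⟨x, hx, hle⟩ := (((innerₛₗ ℝ).flip y).convexOn convex_univ).exists_ge_of_mem_convexHull
    (subset_univ s) (hs hw)
  refine ⟨x, hx, le_of_eq_of_le ?_ hle⟩
  have : δ * ‖y‖ / ‖y‖ * ‖y‖ = δ * ‖y‖ :=
    div_mul_cancel_of_imp fun hy => by rw [hy, mul_zero]
  simp only [LinearMap.flip_apply, innerₛₗ_apply_apply, real_inner_smul_left,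
    real_inner_self_eq_norm_sq]
  rw [← this]
  ring

theorem exp_mul_norm_le_sum_exp_inner {ι E : Type*} [Fintype ι] [NormedAddCommGroup E]
    [InnerProductSpace ℝ E] (v : ι → E) {δ : ℝ} (hδ : 0 ≤ δ)
    (hv : closedBall (0 : E) δ ⊆ convexHull ℝ (range v)) (y : E) :
    exp (δ * ‖y‖) ≤ ∑ i, exp ⟪v i, y⟫ := by
  obtain ⟨_, ⟨i, rfl⟩, hi⟩ := exists_mul_norm_le_inner_of_closedBall_subset_convexHull hδ hv y
  calc exp (δ * ‖y‖) ≤ exp ⟪v i, y⟫ := exp_le_exp.mpr hi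
    _ ≤ ∑ j, exp ⟪v j, y⟫ :=
      Finset.single_le_sum (f := fun j => exp ⟪v j, y⟫) (fun j _ => (exp_pos _).le)
        (Finset.mem_univ i)

theorem integrable_exp_neg_mul_norm {E : Type*} [NormedAddCommGroup E] [NormedSpace ℝ E]
    [FiniteDimensional ℝ E] [MeasurableSpace E] [BorelSpace E] (μ : Measure E)
    [μ.IsAddHaarMeasure] {c : ℝ} (hc : 0 < c) :
    Integrable (fun x : E => exp (-(c * ‖x‖))) μ := by
  cases subsingleton_or_nontrivial E
  · exact Integrable.of_finite
  rw [integrable_fun_norm_addHaar μ (f := fun t => exp (-(c * t)))]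
  refine (integrableOn_rpow_mul_exp_neg_mul_rpow (s := (Module.finrank ℝ E - 1 : ℕ))
    (neg_one_lt_zero.trans_le (Nat.cast_nonneg _)) one_pos hc).congr_fun (fun t ht => ?_) measurableSet_Ioi
  simp [rpow_natCast]

theorem integrable_rpow_neg_of_exp_mul_norm_le {E : Type*} [NormedAddCommGroup E]
    [NormedSpace ℝ E] [FiniteDimensional ℝ E] [MeasurableSpace E] [BorelSpace E]
    {μ : Measure E} [μ.IsAddHaarMeasure] {g : E → ℝ} (hg : AEMeasurable g μ) {δ p : ℝ}
    (hδ : 0 < δ) (hp : 0 < p) (hle : ∀ x, exp (δ * ‖x‖) ≤ g x) :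
    Integrable (fun x => g x ^ (-p)) μ := by
  refine (integrable_exp_neg_mul_norm μ (mul_pos hp hδ)).mono'
    (hg.pow_const _).aestronglyMeasurable (.of_forall fun x => ?_)
  have hgx : 0 < g x := (exp_pos _).trans_le (hle x)
  calc ‖g x ^ (-p)‖ = g x ^ (-p) := norm_of_nonneg (rpow_nonneg hgx.le _)
    _ ≤ exp (δ * ‖x‖) ^ (-p) := rpow_le_rpow_of_nonpos (exp_pos _) (hle x) (by linarith)
    _ = exp (-(p * δ * ‖x‖)) := by rw [← exp_mul]; ring_nf

theorem stmt_19 {n k : ℕ} (v : Fin (k + 1) → EuclideanSpace ℝ (Fin n))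
    (δ : ℝ) (hδ : 0 < δ)
    (hball : Metric.closedBall (0 : EuclideanSpace ℝ (Fin n)) δ ⊆
      convexHull ℝ (Set.range v))
    (f : EuclideanSpace ℝ (Fin n) → ℝ)
    (hf : f = fun y => ∑ i, Real.exp (inner ℝ (v i) y : ℝ)) :
    (∀ y, Real.exp (δ * ‖y‖) ≤ f y) ∧
    ∀ α : ℝ, α < 1 →
      Integrable (fun y : EuclideanSpace ℝ (Fin n) => (f y) ^ (-(1 - α))) := by
  subst hf
  have hlb := exp_mul_norm_le_sum_exp_inner v hδ.le hball
  refine ⟨hlb, fun α hα => integrable_rpow_neg_of_exp_mul_norm_le ?_ hδ (by linarith) hlb⟩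
  fun_prop
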